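/- arXiv:2302.02713 — 2 statements merged into one kernel-verified Lean document; each statement's English description precedes it below -/
import Mathlib

section
/- Let (Θ, 𝒜) be a measurable space, P a probability measure on Θ, L : Θ → ℝ a bounded measurable function, and λ ≥ 0. Define the Gibbs measure Q* by dQ*/dP = exp(−λ·L(θ))/Z where Z = ∫_Θ exp(−λ·L(θ)) dP(θ). Then Q* minimizes the objective Q ↦ λ·∫_Θ L dQ + KL(Q, P) over all probability measures Q absolutely continuous with respect to P; that is, for every such Q, λ·∫_Θ L dQ* + KL(Q*, P) ≤ λ·∫_Θ L dQ + KL(Q, P). -/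
open MeasureTheory Real

/- Kullback–Leibler divergence `KL(μ, ν) = ∫ log (dμ/dν) dμ` when `μ ≪ ν` (and the
log-likelihood ratio is integrable), `+∞` otherwise. -/
open Classical in
noncomputable def klDiv {α : Type*} [MeasurableSpace α] (μ ν : Measure α) : EReal :=
  if μ ≪ ν ∧ Integrable (llr μ ν) μ then ((∫ x, llr μ ν x ∂μ : ℝ) : EReal) else ⊤

/-!
The tilted measure `ν.tilted f`, with density `exp f / ∫ exp f dν`, satisfies
`KL(μ, ν.tilted f) = KL(μ, ν) - ∫ f dμ + log ∫ exp f dν`. Gibbs' inequality `KL(μ, ν.tilted f) ≥ 0`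
is therefore the Donsker–Varadhan bound `-log ∫ exp f dν ≤ -∫ f dμ + KL(μ, ν)`, and the bound is
attained at `μ = ν.tilted f`. The Gibbs posterior is `P.tilted (-λ L)`.
-/

section KullbackLeibler

variable {α : Type*} [MeasurableSpace α] {μ ν : Measure α} {f : α → ℝ}

lemma klDiv_of_ac_of_integrable (hμν : μ ≪ ν) (h_int : Integrable (llr μ ν) μ) :
    klDiv μ ν = ((∫ x, llr μ ν x ∂μ : ℝ) : EReal) :=
  if_pos ⟨hμν, h_int⟩

lemma klDiv_eq_top_of_not_ac_and_integrable (h : ¬ (μ ≪ ν ∧ Integrable (llr μ ν) μ)) :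
    klDiv μ ν = ⊤ :=
  if_neg h

lemma integral_llr_nonneg [IsProbabilityMeasure μ] [IsProbabilityMeasure ν] (hμν : μ ≪ ν)
    (h_int : Integrable (llr μ ν) μ) : 0 ≤ ∫ x, llr μ ν x ∂μ := by
  simpa using InformationTheory.integral_llr_add_sub_measure_univ_nonneg hμν h_int

lemma neg_log_integral_exp_le_neg_integral_add_klDiv [IsProbabilityMeasure μ] [SigmaFinite ν]
    (hfμ : Integrable f μ) (hfν : Integrable (fun x ↦ exp (f x)) ν) :
    ((-log (∫ x, exp (f x) ∂ν) : ℝ) : EReal) ≤ ((-∫ x, f x ∂μ : ℝ) : EReal) + klDiv μ ν := by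
  by_cases h : μ ≪ ν ∧ Integrable (llr μ ν) μ
  · obtain ⟨hμν, h_int⟩ := h
    have : NeZero ν := ⟨fun hν ↦ IsProbabilityMeasure.ne_zero μ
      (Measure.absolutelyContinuous_zero_iff.mp (hν ▸ hμν))⟩
    have : IsProbabilityMeasure (ν.tilted f) := isProbabilityMeasure_tilted hfν
    have h_gibbs := integral_llr_nonneg (hμν.trans (absolutelyContinuous_tilted hfν))
      (integrable_llr_tilted_right hμν hfμ h_int hfν)
    rw [integral_llr_tilted_right hμν hfμ hfν h_int] at h_gibbs
    rw [klDiv_of_ac_of_integrable hμν h_int, ← EReal.coe_add, EReal.coe_le_coe_iff]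
    linarith
  · rw [klDiv_eq_top_of_not_ac_and_integrable h, EReal.add_top_of_ne_bot (EReal.coe_ne_bot _)]
    exact le_top

lemma neg_integral_add_klDiv_tilted_self [SigmaFinite ν] [NeZero ν]
    (hf : Integrable f (ν.tilted f)) (hfν : Integrable (fun x ↦ exp (f x)) ν) :
    ((-∫ x, f x ∂(ν.tilted f) : ℝ) : EReal) + klDiv (ν.tilted f) ν
      = ((-log (∫ x, exp (f x) ∂ν) : ℝ) : EReal) := by
  have : IsProbabilityMeasure (ν.tilted f) := isProbabilityMeasure_tilted hfν
  have h_llr : llr (ν.tilted f) ν =ᵐ[ν.tilted f] fun x ↦ f x - log (∫ x, exp (f x) ∂ν) :=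
    (tilted_absolutelyContinuous ν f).ae_le (log_rnDeriv_tilted_left_self hfν)
  have h_int : Integrable (llr (ν.tilted f) ν) (ν.tilted f) :=
    (integrable_congr h_llr).mpr (hf.sub (integrable_const _))
  rw [klDiv_of_ac_of_integrable (tilted_absolutelyContinuous ν f) h_int, ← EReal.coe_add,
    integral_congr_ae h_llr, integral_sub hf (integrable_const _), integral_const,
    probReal_univ, one_smul]
  ring_nf

end KullbackLeibler

theorem gibbs_posterior_minimizes_general
    {Θ : Type*} [MeasurableSpace Θ] (P : Measure Θ) [IsProbabilityMeasure P]
    (L : Θ → ℝ) (hLmeas : Measurable L) (C : ℝ) (hLbdd : ∀ θ, |L θ| ≤ C)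
    (lam : ℝ)
    (Zpart : ℝ) (hZ : Zpart = ∫ θ, Real.exp (-lam * L θ) ∂P)
    (Qstar : Measure Θ)
    (hQstar : Qstar = P.withDensity fun θ => ENNReal.ofReal (Real.exp (-lam * L θ) / Zpart))
    (Q : Measure Θ) [IsProbabilityMeasure Q] :
    ((lam * ∫ θ, L θ ∂Qstar : ℝ) : EReal) + klDiv Qstar P
      ≤ ((lam * ∫ θ, L θ ∂Q : ℝ) : EReal) + klDiv Q P := by
  set f : Θ → ℝ := fun θ ↦ -lam * L θ
  have hQstar_tilted : Qstar = P.tilted f := by rw [hQstar, hZ]; rfl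
  have hf_int (μ : Measure Θ) [IsFiniteMeasure μ] : Integrable f μ :=
    (Integrable.of_bound hLmeas.aestronglyMeasurable C (.of_forall hLbdd)).const_mul (-lam)
  have hexp_int : Integrable (fun θ ↦ exp (f θ)) P := by
    refine .of_bound (hLmeas.const_mul (-lam)).exp.aestronglyMeasurable (exp (|lam| * C))
      (.of_forall fun θ ↦ ?_)
    rw [norm_of_nonneg (exp_pos _).le, exp_le_exp]
    calc f θ ≤ |-lam * L θ| := le_abs_self _
      _ ≤ |lam| * C := by
        rw [abs_mul, abs_neg]; exact mul_le_mul_of_nonneg_left (hLbdd θ) (abs_nonneg _)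
  have h_energy (μ : Measure Θ) : lam * ∫ θ, L θ ∂μ = -∫ θ, f θ ∂μ := by
    simp only [f, neg_mul, integral_neg, integral_const_mul, neg_neg]
  rw [h_energy, h_energy, hQstar_tilted, neg_integral_add_klDiv_tilted_self (hf_int _) hexp_int]
  exact neg_log_integral_exp_le_neg_integral_add_klDiv (hf_int Q) hexp_int

/-- The Gibbs measure `Q*` with `dQ*/dP = exp(-λ L)/Z` minimizes
`Q ↦ λ ∫ L dQ + KL(Q, P)` over probability measures `Q ≪ P`. -/
theorem gibbs_posterior_minimizes
    {Θ : Type*} [MeasurableSpace Θ] (P : Measure Θ) [IsProbabilityMeasure P]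
    (L : Θ → ℝ) (hLmeas : Measurable L) (C : ℝ) (hLbdd : ∀ θ, |L θ| ≤ C)
    (lam : ℝ) (hlam : 0 ≤ lam)
    (Zpart : ℝ) (hZ : Zpart = ∫ θ, Real.exp (-lam * L θ) ∂P)
    (Qstar : Measure Θ)
    (hQstar : Qstar = P.withDensity fun θ => ENNReal.ofReal (Real.exp (-lam * L θ) / Zpart))
    (Q : Measure Θ) [IsProbabilityMeasure Q] (hQP : Q ≪ P) :
    ((lam * ∫ θ, L θ ∂Qstar : ℝ) : EReal) + klDiv Qstar P
      ≤ ((lam * ∫ θ, L θ ∂Q : ℝ) : EReal) + klDiv Q P :=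
  gibbs_posterior_minimizes_general P L hLmeas C hLbdd lam Zpart hZ Qstar hQstar Q
end

section
/- Let k ≥ 1, σ > 0, and let ε be a random vector in ℝ^k distributed according to the isotropic Gaussian N(0, σ²I_k) (the k-fold product of centered one-dimensional Gaussians with variance σ²). Then for every t ≥ 0, P(‖ε‖² ≥ σ²·(k + 2√(k·t) + 2t)) ≤ exp(−t), where ‖ε‖ is the Euclidean norm (so ‖ε‖²/σ² has the chi-squared distribution with k degrees of freedom). -/
open MeasureTheory Real
open scoped NNReal

/- The isotropic Gaussian `N(m, v I_k)` on `ℝ^k` (with the Euclidean norm), i.e. the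
`k`-fold product of one-dimensional Gaussians with means `m i` and common variance `v`. -/
noncomputable def gaussianPi {k : ℕ} (m : EuclideanSpace ℝ (Fin k)) (v : ℝ≥0) :
    Measure (EuclideanSpace ℝ (Fin k)) :=
  (Measure.pi fun i => ProbabilityTheory.gaussianReal (m i) v).map
    (MeasurableEquiv.toLp 2 (Fin k → ℝ))

/-! Chernoff's method. For `X ~ N(0, v)` and `2av < 1` one has `E exp(aX²) = (1 - 2av)^(-1/2)`,
so by independence of the coordinates `P(‖ε‖² ≥ c) ≤ exp(-ac) (1 - 2av)^(-k/2)`. Choosing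
`a v = √t / (√k + 2√t)`, the bound `log y ≤ (y - y⁻¹) / 2` for `y ≥ 1` (that is, `x ≤ sinh x`
for `x ≥ 0`) brings the exponent down to exactly `-t`. -/

namespace ProbabilityTheory

variable {v : ℝ≥0} {a : ℝ}

lemma gaussianPDFReal_zero_mul_exp_mul_sq (x : ℝ) :
    gaussianPDFReal 0 v x * exp (a * x ^ 2) =
      (√(2 * π * v))⁻¹ * exp (-(1 / (2 * v) - a) * x ^ 2) := by
  rw [gaussianPDFReal, mul_assoc, ← exp_add]
  ring_nf

lemma integrable_exp_mul_sq_gaussianReal (h : 2 * a * v < 1) :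
    Integrable (fun x ↦ exp (a * x ^ 2)) (gaussianReal 0 v) := by
  rcases eq_or_ne v 0 with rfl | hv
  · rw [gaussianReal_zero_var]
    exact integrable_dirac (by simp)
  have hb : 0 < 1 / (2 * v) - a := by
    rw [sub_pos, lt_div_iff₀ (by positivity)]
    linarith
  rw [gaussianReal_of_var_ne_zero _ hv, integrable_withDensity_iff_integrable_smul'
    (measurable_gaussianPDF 0 v) (ae_of_all _ fun _ ↦ gaussianPDF_lt_top)]
  simp_rw [toReal_gaussianPDF, smul_eq_mul, gaussianPDFReal_zero_mul_exp_mul_sq]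
  exact (integrable_exp_neg_mul_sq hb).const_mul _

lemma mgf_sq_gaussianReal (h : 2 * a * v < 1) :
    mgf (fun x ↦ x ^ 2) (gaussianReal 0 v) a = (√(1 - 2 * a * v))⁻¹ := by
  rcases eq_or_ne v 0 with rfl | hv
  · simp [mgf, gaussianReal_zero_var]
  rw [mgf, integral_gaussianReal_eq_integral_smul hv]
  simp_rw [smul_eq_mul, gaussianPDFReal_zero_mul_exp_mul_sq]
  rw [integral_const_mul, integral_gaussian, ← sqrt_inv, ← sqrt_inv, ← sqrt_mul (by positivity)]
  congr 1
  field_simp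

section Pi

variable {ι E : Type*} [Fintype ι] {mE : MeasurableSpace E} {γ : Measure E} [SigmaFinite γ]
  {f : E → ℝ} {t : ℝ}

lemma integrable_exp_mul_sum_pi (hf : Integrable (fun x ↦ exp (t * f x)) γ) :
    Integrable (fun y : ι → E ↦ exp (t * ∑ i, f (y i))) (Measure.pi fun _ ↦ γ) := by
  simp_rw [Finset.mul_sum, exp_sum]
  exact Integrable.fintype_prod fun _ ↦ hf

lemma mgf_sum_pi :
    mgf (fun y : ι → E ↦ ∑ i, f (y i)) (Measure.pi fun _ ↦ γ) t = mgf f γ t ^ Fintype.card ι := by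
  simp_rw [mgf, Finset.mul_sum, exp_sum]
  exact integral_fintype_prod_eq_pow (ι := ι) (μ := γ) fun x ↦ exp (t * f x)

end Pi

lemma pi_gaussianReal_measureReal_sum_sq_ge_le {ι : Type*} [Fintype ι] (ha : 0 ≤ a)
    (h : 2 * a * v < 1) (c : ℝ) :
    (Measure.pi fun _ : ι ↦ gaussianReal 0 v).real {y | c ≤ ∑ i, y i ^ 2} ≤
      exp (-a * c) * (√(1 - 2 * a * v))⁻¹ ^ Fintype.card ι := by
  rw [← mgf_sq_gaussianReal h, ← mgf_sum_pi (γ := gaussianReal 0 v)]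
  exact measure_ge_le_exp_mul_mgf c ha
    (integrable_exp_mul_sum_pi (integrable_exp_mul_sq_gaussianReal h))

end ProbabilityTheory

open ProbabilityTheory

lemma log_le_half_sub_inv {y : ℝ} (hy : 1 ≤ y) : log y ≤ (y - y⁻¹) / 2 := by
  have := self_le_sinh_iff.2 (log_nonneg hy)
  rwa [sinh_eq, exp_neg, exp_log (by linarith)] at this

lemma neg_mul_add_half_mul_log_le {a b : ℝ} (ha : 0 < a) (hb : 0 ≤ b) :
    -(b / (a + 2 * b)) * (a ^ 2 + 2 * a * b + 2 * b ^ 2) + a ^ 2 / 2 * log ((a + 2 * b) / a) ≤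
      -b ^ 2 := by
  have hy : 1 ≤ (a + 2 * b) / a := by
    rw [le_div_iff₀ ha]
    linarith
  calc _ ≤ -(b / (a + 2 * b)) * (a ^ 2 + 2 * a * b + 2 * b ^ 2) +
        a ^ 2 / 2 * (((a + 2 * b) / a - ((a + 2 * b) / a)⁻¹) / 2) := by
        gcongr
        exact log_le_half_sub_inv hy
    _ = -b ^ 2 := by
        field_simp
        ring

lemma inv_sqrt_pow_eq_exp {x : ℝ} (hx : 0 < x) (k : ℕ) :
    (√x)⁻¹ ^ k = exp (k / 2 * log x⁻¹) := by
  rw [← exp_log (inv_pos.2 (sqrt_pos.2 hx)), ← exp_nat_mul, log_inv, log_inv, log_sqrt hx.le]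
  ring_nf

lemma exp_neg_mul_mul_inv_sqrt_pow_le {k : ℕ} {t : ℝ} (hk : 0 < k) (ht : 0 ≤ t) :
    exp (-(√t / (√k + 2 * √t)) * (k + 2 * √(k * t) + 2 * t)) *
      (√(1 - 2 * (√t / (√k + 2 * √t))))⁻¹ ^ k ≤ exp (-t) := by
  have ha : 0 < √(k : ℝ) := sqrt_pos.2 (by exact_mod_cast hk)
  have hb : 0 ≤ √t := sqrt_nonneg t
  have hx : 1 - 2 * (√t / (√k + 2 * √t)) = √k / (√k + 2 * √t) := by
    field_simp
    ring
  rw [hx, inv_sqrt_pow_eq_exp (by positivity), inv_div, ← exp_add, exp_le_exp]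
  have := neg_mul_add_half_mul_log_le ha hb
  rwa [sq_sqrt (Nat.cast_nonneg k), sq_sqrt ht, mul_assoc, ← sqrt_mul (Nat.cast_nonneg k)] at this

/-- Laurent–Massart chi-squared upper tail: if `ε ~ N(0, σ²I_k)` on `ℝ^k`, then for all
`t ≥ 0`, `P(‖ε‖² ≥ σ²(k + 2√(kt) + 2t)) ≤ exp(-t)`. -/
theorem chi_squared_tail (k : ℕ) (hk : 1 ≤ k) (σ : ℝ) (hσ : 0 < σ) (t : ℝ) (ht : 0 ≤ t) :
    gaussianPi (0 : EuclideanSpace ℝ (Fin k)) ⟨σ ^ 2, sq_nonneg σ⟩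
        {x | σ ^ 2 * (k + 2 * Real.sqrt (k * t) + 2 * t) ≤ ‖x‖ ^ 2}
      ≤ ENNReal.ofReal (Real.exp (-t)) := by
  set v : ℝ≥0 := ⟨σ ^ 2, sq_nonneg σ⟩
  set c := σ ^ 2 * (k + 2 * √(k * t) + 2 * t)
  set L := √t / (√k + 2 * √t)
  have hL : 0 ≤ L := by positivity
  have hL_lt : 2 * L < 1 := by
    rw [mul_div_assoc', div_lt_one (by positivity)]
    linarith [sqrt_pos.2 (show (0 : ℝ) < k by exact_mod_cast hk)]
  have hv : (v : ℝ) = σ ^ 2 := rfl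
  have hLv : 2 * (L / σ ^ 2) * v = 2 * L := by
    rw [hv]
    field_simp
  have hLc : -(L / σ ^ 2) * c = -L * (k + 2 * √(k * t) + 2 * t) := by
    simp only [c]
    field_simp
  have hpre : MeasurableEquiv.toLp 2 (Fin k → ℝ) ⁻¹' {x | c ≤ ‖x‖ ^ 2} =
      {y | c ≤ ∑ i, y i ^ 2} := by
    ext y
    simp [EuclideanSpace.real_norm_sq_eq]
  have hchernoff := pi_gaussianReal_measureReal_sum_sq_ge_le (ι := Fin k)
    (div_nonneg hL (sq_nonneg σ)) (hLv ▸ hL_lt) c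
  rw [hLv, hLc, Fintype.card_fin] at hchernoff
  rw [gaussianPi, MeasurableEquiv.map_apply, hpre, ← ofReal_measureReal]
  exact ENNReal.ofReal_le_ofReal (hchernoff.trans (exp_neg_mul_mul_inv_sqrt_pow_le hk ht))
end
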